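/- arXiv:1104.4674 — 2 statements merged into one kernel-verified Lean document; each statement's English description precedes it below -/
import Mathlib

section
/- Let B : ℝ^n → ℝ^t be a linear map, M ⊆ ℝ^t a set (signal model), and suppose: (A) ‖x‖_EMD ≤ ‖Bx‖₁ for all x ∈ ℝ^n; (B) for all x ∈ ℝ^n with nonnegative entries there exists y ∈ M with ‖y − Bx‖₁ ≤ ε · min over k-sparse x' of ‖x − x'‖_EMD; (C) there is a map B⁻¹ : ℝ^t → ℝ^n such that ‖y − B(B⁻¹ y)‖₁ ≤ D · min over x ∈ ℝ^n of ‖y − Bx‖₁ for all y. Suppose further that a recovery procedure given Bx returns y* with ‖y* − Bx‖₁ ≤ C' · min over y' ∈ M of ‖y' − Bx‖₁. Then x* = B⁻¹(y*) satisfies ‖x − x*‖_EMD ≤ (1+D)·C'·ε · min over k-sparse x' of ‖x − x'‖_EMD, for all nonnegative x. -/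
open scoped Classical BigOperators

noncomputable def l1 {t : ℕ} (v : Fin t → ℝ) : ℝ := ∑ i, |v i|

def Sparse {n : ℕ} (k : ℕ) (x : Fin n → ℝ) : Prop :=
  (Finset.univ.filter fun i => x i ≠ 0).card ≤ k

lemma l1_nonneg {t : ℕ} (v : Fin t → ℝ) : 0 ≤ l1 v :=
  Finset.sum_nonneg fun i _ => abs_nonneg _

lemma l1_tri {t : ℕ} (a b : Fin t → ℝ) : l1 (a + b) ≤ l1 a + l1 b := by
  rw [l1, l1, l1, ← Finset.sum_add_distrib]
  exact Finset.sum_le_sum fun i _ => abs_add_le _ _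

/-- Framework lemma: given an EMD-to-ℓ₁ expanding map `B`, model-alignment of
EMD with `M`, invertibility of `B`, and an ℓ₁/ℓ₁ recovery guarantee over `M`,
the composed scheme gives EMD/EMD recovery with factor `(1+D)·C'·ε`. -/
theorem stmt0 {n t k : ℕ}
    (B : (Fin n → ℝ) →ₗ[ℝ] (Fin t → ℝ))
    (M : Set (Fin t → ℝ))
    (emd : (Fin n → ℝ) → ℝ)
    (hemd_nonneg : ∀ a, 0 ≤ emd a)
    (hemd_tri : ∀ a b, emd (a + b) ≤ emd a + emd b)
    (hemd_neg : ∀ a, emd (-a) = emd a)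
    (ε C' D : ℝ) (hε : 0 ≤ ε) (hC' : 0 ≤ C') (hD : 0 ≤ D)
    -- Property A: EMD-to-ℓ₁ expansion
    (hA : ∀ x : Fin n → ℝ, emd x ≤ l1 (B x))
    -- Property B: model-alignment of EMD with M
    (hB : ∀ x : Fin n → ℝ, (∀ i, 0 ≤ x i) →
      ∃ y ∈ M, l1 (y - B x) ≤ ε * sInf {e | ∃ x' : Fin n → ℝ, Sparse k x' ∧ e = emd (x - x')})
    -- Property C: invertibility
    (Binv : (Fin t → ℝ) → (Fin n → ℝ))
    (hC : ∀ y : Fin t → ℝ, l1 (y - B (Binv y)) ≤ D * sInf {e | ∃ x : Fin n → ℝ, e = l1 (y - B x)})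
    -- the vector to recover and the recovery guarantee
    (x : Fin n → ℝ) (hx : ∀ i, 0 ≤ x i)
    (ystar : Fin t → ℝ)
    (hrec : l1 (ystar - B x) ≤ C' * sInf {e | ∃ y' ∈ M, e = l1 (y' - B x)}) :
    emd (x - Binv ystar) ≤
      (1 + D) * C' * ε * sInf {e | ∃ x' : Fin n → ℝ, Sparse k x' ∧ e = emd (x - x')} := by
  set S := sInf {e | ∃ x' : Fin n → ℝ, Sparse k x' ∧ e = emd (x - x')} with hS
  have hSnn : 0 ≤ S := by
    apply Real.sInf_nonneg
    rintro e ⟨x', _, rfl⟩; exact hemd_nonneg _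
  -- step 1: l1(ystar - Bx) ≤ C' * ε * S
  obtain ⟨y, hyM, hy⟩ := hB x hx
  have h1 : sInf {e | ∃ y' ∈ M, e = l1 (y' - B x)} ≤ ε * S := by
    have hbdd : BddBelow {e | ∃ y' ∈ M, e = l1 (y' - B x)} :=
      ⟨0, by rintro e ⟨y', _, rfl⟩; exact l1_nonneg _⟩
    exact (csInf_le hbdd ⟨y, hyM, rfl⟩).trans hy
  have h2 : l1 (ystar - B x) ≤ C' * (ε * S) :=
    hrec.trans (mul_le_mul_of_nonneg_left h1 hC')
  -- step 2: l1(ystar - B(Binv ystar)) ≤ D * C' * ε * S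
  have h3 : l1 (ystar - B (Binv ystar)) ≤ D * (C' * (ε * S)) := by
    refine (hC ystar).trans ?_
    have hle : sInf {e | ∃ x' : Fin n → ℝ, e = l1 (ystar - B x')} ≤ l1 (ystar - B x) :=
      csInf_le ⟨0, by rintro e ⟨x', rfl⟩; exact l1_nonneg _⟩ ⟨x, rfl⟩
    exact mul_le_mul_of_nonneg_left (hle.trans h2) hD
  -- combine
  have key : emd (x - Binv ystar) ≤ l1 (B x - ystar) + l1 (ystar - B (Binv ystar)) := by
    refine (hA _).trans ?_
    have : B (x - Binv ystar) = (B x - ystar) + (ystar - B (Binv ystar)) := by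
      rw [map_sub]; ring
    rw [this]; exact l1_tri _ _
  have hsymm : l1 (B x - ystar) = l1 (ystar - B x) := by
    rw [l1, l1]; congr 1; funext i; simp [abs_sub_comm]
  calc emd (x - Binv ystar) ≤ l1 (ystar - B x) + l1 (ystar - B (Binv ystar)) := by
        rw [← hsymm]; exact key
    _ ≤ C' * (ε * S) + D * (C' * (ε * S)) := add_le_add h2 h3
    _ = (1 + D) * C' * ε * S := by ring
end

section
/- Let c ≥ 2 be an integer and n = (c^l − 1)/(c − 1), and identify [n] with the nodes of the complete c-ary tree of depth l. There exists a constant c' such that for every subset S ⊆ [n] with |S| = k ≤ n/2, there is a subset T ⊆ [n] with S ⊆ T, T containing the root and connected in the tree (closed under taking parents), and |T| ≤ c'·k·log(n/k). -/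
open scoped Classical BigOperators

/-- In the complete `c`-ary tree on `[n]` (root `0`, parent of `v > 0` is
`(v-1)/c`), `T` is a rooted connected subset: it contains the root and is
closed under taking parents. -/
def RootedSubtree {n : ℕ} (c : ℕ) (T : Finset (Fin n)) : Prop :=
  (∀ v : Fin n, (v : ℕ) = 0 → v ∈ T) ∧
  ∀ v ∈ T, ∀ w : Fin n, (v : ℕ) ≠ 0 → (w : ℕ) = ((v : ℕ) - 1) / c → w ∈ T

/-!
Take `T` to be the ancestor closure of `S` together with the root. Put `m = ⌊n / k⌋` and
`j = ⌊log_c m⌋ + 1`, so that `n < c^j k`. Every ancestor of `s ∈ S` at height at least `j`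
has label at most `s / c^j < k`, so it lies among the first `k` nodes; the ancestors at
height below `j` number at most `j` per element of `S`. Hence `|T| ≤ k + k j = O(k log(n/k))`.
-/

namespace CaryTree

def parent (c v : ℕ) : ℕ := (v - 1) / c

theorem iterate_parent_le_div (c j v : ℕ) : (parent c)^[j] v ≤ v / c ^ j := by
  induction j with
  | zero => simp
  | succ j ih =>
    rw [Function.iterate_succ_apply', pow_succ, ← Nat.div_div_eq_div_mul]
    exact Nat.div_le_div_right ((Nat.sub_le _ _).trans ih)

theorem iterate_parent_le (c j v : ℕ) : (parent c)^[j] v ≤ v :=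
  (iterate_parent_le_div c j v).trans (Nat.div_le_self _ _)

noncomputable def ancestorClosure {n : ℕ} (c : ℕ) (S : Finset (Fin n)) : Finset (Fin n) :=
  Finset.univ.filter fun w => (w : ℕ) = 0 ∨ ∃ s ∈ S, ∃ j, (w : ℕ) = (parent c)^[j] s

variable {n : ℕ} (c : ℕ) (S : Finset (Fin n))

theorem subset_ancestorClosure : S ⊆ ancestorClosure c S := fun s hs => by
  simpa [ancestorClosure] using Or.inr ⟨s, hs, 0, rfl⟩

theorem rootedSubtree_ancestorClosure : RootedSubtree c (ancestorClosure c S) := by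
  refine ⟨fun v hv => by simp [ancestorClosure, hv], fun v hv w hv0 hw => ?_⟩
  simp only [ancestorClosure, Finset.mem_filter, Finset.mem_univ, true_and] at hv ⊢
  rcases hv with hv | ⟨s, hs, j, hj⟩
  · exact absurd hv hv0
  · exact Or.inr ⟨s, hs, j + 1, by rw [Function.iterate_succ_apply', ← hj]; exact hw⟩

/-- If `n ≤ c^j k`, ancestors at height `≥ j` fall among the first `k` labels. -/
theorem card_ancestorClosure_le {k j : ℕ} (hk : 0 < k) (hn : n ≤ c ^ j * k) :
    (ancestorClosure c S).card ≤ k + S.card * j := by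
  have hcover : (ancestorClosure c S).map Fin.valEmbedding ⊆
      Finset.range k ∪ S.biUnion fun s => (Finset.range j).image fun i => (parent c)^[i] s := by
    intro w hw
    simp only [ancestorClosure, Finset.mem_map, Finset.mem_filter, Finset.mem_univ, true_and,
      Fin.valEmbedding_apply] at hw
    obtain ⟨w, hw | ⟨s, hs, i, hi⟩, rfl⟩ := hw
    · simp [hw, hk]
    rcases lt_or_ge i j with hij | hji
    · exact Finset.mem_union_right _
        (Finset.mem_biUnion.2 ⟨s, hs, Finset.mem_image.2 ⟨i, Finset.mem_range.2 hij, hi.symm⟩⟩)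
    · refine Finset.mem_union_left _ (Finset.mem_range.2 ?_)
      have hsplit : (parent c)^[i] s = (parent c)^[i - j] ((parent c)^[j] s) := by
        rw [← Function.iterate_add_apply, Nat.sub_add_cancel hji]
      calc (w : ℕ) = (parent c)^[i] s := hi
        _ ≤ (parent c)^[j] s := hsplit ▸ iterate_parent_le c _ _
        _ ≤ s / c ^ j := iterate_parent_le_div c j s
        _ < k := Nat.div_lt_of_lt_mul (s.2.trans_le hn)
  calc (ancestorClosure c S).card = ((ancestorClosure c S).map Fin.valEmbedding).card :=
        (Finset.card_map _).symm
    _ ≤ k + S.card * j := by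
      refine (Finset.card_le_card hcover).trans ((Finset.card_union_le _ _).trans ?_)
      rw [Finset.card_range]
      refine Nat.add_le_add_left (Finset.card_biUnion_le_card_mul _ _ _ fun s _ => ?_) _
      exact Finset.card_image_le.trans (Finset.card_range j).le

end CaryTree

theorem Nat.lt_pow_succ_log_div_mul {c n k : ℕ} (hc : 1 < c) (hk : 0 < k) :
    n < c ^ (Nat.log c (n / k) + 1) * k :=
  calc n < (n / k + 1) * k := Nat.lt_div_mul_add hk |>.trans_eq (by ring)
    _ ≤ c ^ (Nat.log c (n / k) + 1) * k :=
      Nat.mul_le_mul_right _ (Nat.lt_pow_succ_log_self hc _)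

theorem Nat.log_mul_log_two_le_log {c : ℕ} (hc : 2 ≤ c) (m : ℕ) :
    (Nat.log c m : ℝ) * Real.log 2 ≤ Real.log m :=
  calc (Nat.log c m : ℝ) * Real.log 2 ≤ Real.logb 2 m * Real.log 2 := by
        gcongr
        exact (Nat.cast_le.2 (Nat.log_anti_left one_lt_two hc)).trans
          (by exact_mod_cast Real.natLog_le_logb m 2)
    _ = Real.log m := by rw [← Real.log_div_log, div_mul_cancel₀ _ (Real.log_pos one_lt_two).ne']

/-- Every `k`-subset of the complete `c`-ary tree on `n = (c^l - 1)/(c - 1)`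
nodes extends to a rooted connected subset of size `O(k·log(n/k))`. -/
theorem stmt7 :
    ∃ c' : ℝ, 0 < c' ∧
      ∀ (c l n k : ℕ), 2 ≤ c → n = (c^l - 1) / (c - 1) → 1 ≤ k → 2 * k ≤ n →
        ∀ S : Finset (Fin n), S.card = k →
          ∃ T : Finset (Fin n), S ⊆ T ∧ RootedSubtree c T ∧
            (T.card : ℝ) ≤ c' * k * Real.log ((n : ℝ) / k) := by
  have hlog2 : 0 < Real.log 2 := Real.log_pos one_lt_two
  refine ⟨3 / Real.log 2, by positivity, fun c l n k hc _ hk hkn S hS => ?_⟩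
  set m := n / k
  have hm : (2 : ℝ) ≤ m := by exact_mod_cast (Nat.le_div_iff_mul_le hk).2 (by omega)
  have hmn : (m : ℝ) ≤ n / k := Nat.cast_div_le
  have hlog_two_le : Real.log 2 ≤ Real.log (n / k) := Real.log_le_log two_pos (hm.trans hmn)
  have hlog_m_le : Real.log m ≤ Real.log (n / k) := Real.log_le_log (by linarith) hmn
  have hlog_c := Nat.log_mul_log_two_le_log hc m
  have hcard := CaryTree.card_ancestorClosure_le c S hk
    (Nat.lt_pow_succ_log_div_mul (n := n) (by omega) hk).le
  refine ⟨_, CaryTree.subset_ancestorClosure c S, CaryTree.rootedSubtree_ancestorClosure c S, ?_⟩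
  calc ((CaryTree.ancestorClosure c S).card : ℝ) ≤ k * (2 + Nat.log c m) := by
        rw [hS] at hcard
        exact_mod_cast hcard.trans_eq (by ring)
    _ ≤ k * (3 / Real.log 2 * Real.log (n / k)) := by
        gcongr
        rw [div_mul_eq_mul_div, le_div_iff₀ hlog2, add_mul]
        linarith
    _ = 3 / Real.log 2 * k * Real.log (n / k) := by ring
end
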